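/- Let $d \geq 1$ be an integer, and let $e_0 \in \mathbb{R}$, $r_0 > 0$, $c \geq 0$. For $0 \leq i \leq n$ set $e_i = i\, d^{i-1} c\, r_0 + d^i e_0$ and $\rho_i = d^i r_0$ (the degree and rank of $E_i$). Suppose $f_0 \geq f_1 \geq \cdots \geq f_r > 0$ are real numbers (ranks of $F_i$) and $g_i \leq f_i \cdot (e_i/d^i)/r_0$ for each $0 \leq i \leq r$, where $r \leq n$. Then $(\sum_{i=0}^r g_i)/(\sum_{i=0}^r f_i) \leq (\sum_{i=0}^r e_i)/(\sum_{i=0}^r \rho_i)$. -/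
import Mathlib


open Finset

lemma cheb_weighted (r : ℕ) (a f ρ : ℕ → ℝ)
    (hf0 : ∀ i, i ≤ r → 0 ≤ f i) (hρ0 : ∀ i, i ≤ r → 0 ≤ ρ i)
    (ha : ∀ i j, i ≤ j → j ≤ r → a i ≤ a j)
    (hf : ∀ i j, i ≤ j → j ≤ r → f j ≤ f i)
    (hρ : ∀ i j, i ≤ j → j ≤ r → ρ i ≤ ρ j) :
    (∑ i ∈ range (r + 1), f i * a i) * (∑ i ∈ range (r + 1), ρ i) ≤
      (∑ i ∈ range (r + 1), ρ i * a i) * (∑ i ∈ range (r + 1), f i) := by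
  have key : 0 ≤ ∑ i ∈ range (r + 1), ∑ j ∈ range (r + 1),
      f i * ρ j * (a j - a i) := by
    have hcomm : (∑ i ∈ range (r + 1), ∑ j ∈ range (r + 1), f i * ρ j * (a j - a i))
        = ∑ i ∈ range (r + 1), ∑ j ∈ range (r + 1), f j * ρ i * (a i - a j) :=
      Finset.sum_comm
    have twice : (∑ i ∈ range (r + 1), ∑ j ∈ range (r + 1), f i * ρ j * (a j - a i))
        + (∑ i ∈ range (r + 1), ∑ j ∈ range (r + 1), f i * ρ j * (a j - a i))
        = ∑ i ∈ range (r + 1), ∑ j ∈ range (r + 1),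
          (f i * ρ j * (a j - a i) + f j * ρ i * (a i - a j)) := by
      nth_rewrite 2 [hcomm]
      simp [← Finset.sum_add_distrib]
    nlinarith [show (0:ℝ) ≤ ∑ i ∈ range (r + 1), ∑ j ∈ range (r + 1),
        (f i * ρ j * (a j - a i) + f j * ρ i * (a i - a j)) from
      Finset.sum_nonneg fun i hi => Finset.sum_nonneg fun j hj => by
        simp only [Finset.mem_range, Nat.lt_succ_iff] at hi hj
        rcases le_total i j with h | h
        · have h1 : a i ≤ a j := ha i j h hj
          have h2 : f j * ρ i ≤ f i * ρ j :=
            mul_le_mul (hf i j h hj) (hρ i j h hj) (hρ0 i hi) (hf0 i hi)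
          nlinarith [mul_nonneg (sub_nonneg.2 h1) (sub_nonneg.2 h2)]
        · have h1 : a j ≤ a i := ha j i h hi
          have h2 : f i * ρ j ≤ f j * ρ i :=
            mul_le_mul (hf j i h hi) (hρ j i h hi) (hρ0 j hj) (hf0 j hj)
          nlinarith [mul_nonneg (sub_nonneg.2 h1) (sub_nonneg.2 h2)]]
  have expand : (∑ i ∈ range (r + 1), ρ i * a i) * (∑ i ∈ range (r + 1), f i)
      - (∑ i ∈ range (r + 1), f i * a i) * (∑ i ∈ range (r + 1), ρ i)
      = ∑ i ∈ range (r + 1), ∑ j ∈ range (r + 1), f i * ρ j * (a j - a i) := by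
    rw [Finset.sum_mul_sum, Finset.sum_mul_sum]
    rw [Finset.sum_comm (f := fun i j => ρ i * a i * f j)]
    rw [← Finset.sum_sub_distrib]
    congr 1; ext i
    rw [← Finset.sum_sub_distrib]
    congr 1; ext j
    ring
  linarith [expand ▸ key]

/-- **The key slope estimate in the proof of semistability of a system of Hodge bundles.**
With `eᵢ = i d^{i-1} c r₀ + dⁱ e₀` (degrees of `Eᵢ`), `ρᵢ = dⁱ r₀` (ranks of `Eᵢ`),
`f₀ ≥ f₁ ≥ ⋯ ≥ f_r > 0` (ranks of `Fᵢ`) and `gᵢ ≤ fᵢ (eᵢ/dⁱ)/r₀` (degree bounds from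
semistability of `Eᵢ`), one gets `(∑gᵢ)/(∑fᵢ) ≤ (∑eᵢ)/(∑ρᵢ)`, i.e. `μ(F) ≤ μ(⊕Eᵢ)`. -/
theorem hodge_slope_estimate (d : ℕ) (hd : 1 ≤ d) (r n : ℕ) (hrn : r ≤ n)
    (e₀ : ℝ) (r₀ : ℝ) (hr₀ : 0 < r₀) (c : ℝ) (hc : 0 ≤ c)
    (e ρ : ℕ → ℝ)
    (he : ∀ i ≤ n, e i = (i : ℝ) * (d : ℝ) ^ (i - 1) * c * r₀ + (d : ℝ) ^ i * e₀)
    (hρ : ∀ i ≤ n, ρ i = (d : ℝ) ^ i * r₀)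
    (f g : ℕ → ℝ)
    (hf_anti : ∀ i j, i ≤ j → j ≤ r → f j ≤ f i) (hf_pos : 0 < f r)
    (hg : ∀ i ≤ r, g i ≤ f i * (e i / (d : ℝ) ^ i) / r₀) :
    (∑ i ∈ range (r + 1), g i) / (∑ i ∈ range (r + 1), f i) ≤
      (∑ i ∈ range (r + 1), e i) / (∑ i ∈ range (r + 1), ρ i) := by
  have hd1 : (1:ℝ) ≤ (d:ℝ) := by exact_mod_cast hd
  have hdpos : (0:ℝ) < (d:ℝ) := lt_of_lt_of_le one_pos hd1
  set a : ℕ → ℝ := fun i => (i : ℝ) * c / (d : ℝ) + e₀ / r₀ with ha_def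
  -- value of e i / d^i / r₀
  have hav : ∀ i ≤ n, e i / (d:ℝ) ^ i / r₀ = a i := by
    intro i hi
    have hpow : (0:ℝ) < (d:ℝ) ^ i := pow_pos hdpos i
    rw [he i hi]
    rcases i with _ | k
    · simp [ha_def]
    · have : (d:ℝ) ^ (k + 1) = (d:ℝ) ^ k * d := by ring
      simp only [ha_def, Nat.add_sub_cancel]
      field_simp
      ring
  have hfpos : ∀ i, i ≤ r → 0 < f i := fun i hi => lt_of_lt_of_le hf_pos (hf_anti i r hi le_rfl)
  have hf0 : ∀ i, i ≤ r → 0 ≤ f i := fun i hi => (hfpos i hi).le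
  have hρval : ∀ i, i ≤ r → ρ i = (d:ℝ) ^ i * r₀ := fun i hi => hρ i (hi.trans hrn)
  have hρ0 : ∀ i, i ≤ r → 0 ≤ ρ i := fun i hi => by
    rw [hρval i hi]; positivity
  have hρmono : ∀ i j, i ≤ j → j ≤ r → ρ i ≤ ρ j := by
    intro i j hij hj
    rw [hρval i (hij.trans hj), hρval j hj]
    exact mul_le_mul_of_nonneg_right (pow_le_pow_right₀ hd1 hij) hr₀.le
  have hamono : ∀ i j, i ≤ j → j ≤ r → a i ≤ a j := by
    intro i j hij hj
    simp only [ha_def]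
    have : (i:ℝ) ≤ j := by exact_mod_cast hij
    gcongr
  have hfsum : 0 < ∑ i ∈ range (r + 1), f i :=
    Finset.sum_pos (fun i hi => hfpos i (Nat.lt_succ_iff.mp (Finset.mem_range.mp hi)))
      ⟨0, Finset.mem_range.mpr (Nat.succ_pos r)⟩
  have hρsum : 0 < ∑ i ∈ range (r + 1), ρ i := by
    refine Finset.sum_pos (fun i hi => ?_) ⟨0, Finset.mem_range.mpr (Nat.succ_pos r)⟩
    rw [hρval i (Nat.lt_succ_iff.mp (Finset.mem_range.mp hi))]
    positivity
  -- ρ i * a i = e i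
  have hρa : ∀ i, i ≤ r → ρ i * a i = e i := by
    intro i hi
    have hi' := hi.trans hrn
    have := hav i hi'
    have hpow : (0:ℝ) < (d:ℝ) ^ i := pow_pos hdpos i
    rw [hρval i hi, ← this]
    field_simp
  have cheb := cheb_weighted r a f ρ hf0 hρ0 hamono hf_anti hρmono
  have hge : ∑ i ∈ range (r + 1), g i ≤ ∑ i ∈ range (r + 1), f i * a i := by
    refine Finset.sum_le_sum fun i hi => ?_
    have hi' := Nat.lt_succ_iff.mp (Finset.mem_range.mp hi)
    calc g i ≤ f i * (e i / (d:ℝ) ^ i) / r₀ := hg i hi'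
      _ = f i * (e i / (d:ℝ) ^ i / r₀) := by ring
      _ = f i * a i := by rw [hav i (hi'.trans hrn)]
  have hsube : (∑ i ∈ range (r + 1), ρ i * a i) = ∑ i ∈ range (r + 1), e i := by
    refine Finset.sum_congr rfl fun i hi => hρa i (Nat.lt_succ_iff.mp (Finset.mem_range.mp hi))
  rw [div_le_div_iff₀ hfsum hρsum]
  calc (∑ i ∈ range (r + 1), g i) * (∑ i ∈ range (r + 1), ρ i)
      ≤ (∑ i ∈ range (r + 1), f i * a i) * (∑ i ∈ range (r + 1), ρ i) :=
        mul_le_mul_of_nonneg_right hge hρsum.le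
    _ ≤ (∑ i ∈ range (r + 1), ρ i * a i) * (∑ i ∈ range (r + 1), f i) := cheb
    _ = (∑ i ∈ range (r + 1), e i) * (∑ i ∈ range (r + 1), f i) := by rw [hsube]
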